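/- arXiv:2005.09373 — 4 statements merged into one kernel-verified Lean document; each statement's English description precedes it below -/
import Mathlib

section
/- The second curvature satisfies 𝔠₂ = [(EN + GL − 2FM)·V + (LN − M²)·C − E·T² − G·P² − 2(APN − BPM − ATM + BTL − PTF)] / (3·[(EG − F²)·C − E·B² + 2FAB − G·A²]). -/
open Matrix

/-!
Since `S - λ·1 = I⁻¹ (II - λ I)`, the characteristic polynomial of `S` is
`det (II - λ I) / det I`. Comparing its values at `λ = 1` and `λ = -1` isolates its odd part,
and hence `𝔠₂`, through `det (II + I) - det (II - I)`; expanding these two symmetric `3 × 3`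
determinants gives the formula.
-/

theorem Matrix.det_mul_det_inv_mul_sub_smul_one {n K : Type*} [Fintype n] [DecidableEq n]
    [Field K] {I II : Matrix n n K} (hI : I.det ≠ 0) (t : K) :
    I.det * (I⁻¹ * II - t • 1).det = (II - t • I).det := by
  rw [← nonsing_inv_mul I hI.isUnit, ← Matrix.mul_smul, ← Matrix.mul_sub,
    ← det_mul, mul_nonsing_inv_cancel_left _ _ hI.isUnit]

theorem linear_coeff_eq_of_forall_eq_cubic {R : Type*} [CommRing R] {f : R → R} {a b c : R}
    (h : ∀ t, f t = -t ^ 3 + 3 * a * t ^ 2 - 3 * b * t + c) :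
    6 * b = f (-1) - f 1 - 2 := by
  rw [h, h]
  ring

/-- With `I`, `II` the fundamental form matrices, `det I ≠ 0`,
`S = I⁻¹ * II` the shape operator and the curvatures defined by the characteristic
polynomial identity, the second curvature is given by the stated formula. -/
theorem second_curvature_formula
    (E F G A B C L M N P T V c₁ c₂ c₃ : ℝ)
    (hdet : (E * G - F ^ 2) * C - E * B ^ 2 + 2 * F * A * B - G * A ^ 2 ≠ 0)
    (S : Matrix (Fin 3) (Fin 3) ℝ)
    (hS : S = (!![E, F, A; F, G, B; A, B, C])⁻¹ * !![L, M, P; M, N, T; P, T, V])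
    (hchar : ∀ lam : ℝ,
      (S - lam • (1 : Matrix (Fin 3) (Fin 3) ℝ)).det
        = -lam ^ 3 + 3 * c₁ * lam ^ 2 - 3 * c₂ * lam + c₃) :
    c₂ = ((E * N + G * L - 2 * F * M) * V + (L * N - M ^ 2) * C - E * T ^ 2 - G * P ^ 2
          - 2 * (A * P * N - B * P * M - A * T * M + B * T * L - P * T * F))
        / (3 * ((E * G - F ^ 2) * C - E * B ^ 2 + 2 * F * A * B - G * A ^ 2)) := by
  set I₁ : Matrix (Fin 3) (Fin 3) ℝ := !![E, F, A; F, G, B; A, B, C]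
  set II : Matrix (Fin 3) (Fin 3) ℝ := !![L, M, P; M, N, T; P, T, V]
  have hdetI : I₁.det = (E * G - F ^ 2) * C - E * B ^ 2 + 2 * F * A * B - G * A ^ 2 := by
    simp only [I₁, det_fin_three, of_apply, cons_val', cons_val_zero, cons_val_one, cons_val,
      cons_val_fin_one]
    ring
  have hodd :
      I₁.det * (6 * c₂ + 2) = (II - (-1 : ℝ) • I₁).det - (II - (1 : ℝ) • I₁).det := by
    have hI : I₁.det ≠ 0 := hdetI ▸ hdet
    rw [← det_mul_det_inv_mul_sub_smul_one hI, ← det_mul_det_inv_mul_sub_smul_one hI, ← hS,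
      linear_coeff_eq_of_forall_eq_cubic (f := fun t => (S - t • 1).det) hchar]
    ring
  simp only [I₁, II, det_fin_three, of_apply, cons_val', cons_val_zero, cons_val_one, cons_val,
    cons_val_fin_one, neg_smul, one_smul, neg_of, neg_cons, neg_empty, of_sub_of, sub_cons,
    head_cons, tail_cons, sub_neg_eq_add, sub_self, zero_empty] at hodd
  rw [eq_div_iff (mul_ne_zero three_ne_zero hdet)]
  linear_combination hodd / 2
end

section
/- At every point (u, v, w) with W(u) > 0, the third fundamental form matrix of the rotational hypersurface is the diagonal matrix III = diag(ψ²/W², (φ'²/W)·cos²w, φ'²/W). -/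
open Real Matrix

noncomputable section

/-- A vector in Euclidean 4-space `𝔼⁴`. -/
def vec4 (a b c d : ℝ) : EuclideanSpace ℝ (Fin 4) :=
  (WithLp.equiv 2 (Fin 4 → ℝ)).symm ![a, b, c, d]

/-- Partial derivative in the `i`-th variable (`i = 0,1,2` for `u,v,w`)
of a map `ℝ³ → 𝔼⁴`. -/
def pd : Fin 3 → (ℝ → ℝ → ℝ → EuclideanSpace ℝ (Fin 4)) →
    ℝ → ℝ → ℝ → EuclideanSpace ℝ (Fin 4)
  | 0, X, u, v, w => deriv (fun t => X t v w) u
  | 1, X, u, v, w => deriv (fun t => X u t w) v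
  | 2, X, u, v, w => deriv (fun t => X u v t) w

/-- The rotational hypersurface in `𝔼⁴` generated by the profile curve
`u ↦ (f u, 0, 0, φ u)` rotated about the `x₄`-axis. -/
def rotHyp (f φ : ℝ → ℝ) (u v w : ℝ) : EuclideanSpace ℝ (Fin 4) :=
  vec4 (f u * cos v * cos w) (f u * sin v * cos w) (f u * sin w) (φ u)

/-- The Gauss map `G = W^{-1/2}·(φ'·cos v·cos w, φ'·sin v·cos w, φ'·sin w, -f')`,
where `W = f'² + φ'²`. -/
def gaussMap (f φ : ℝ → ℝ) (u v w : ℝ) : EuclideanSpace ℝ (Fin 4) :=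
  ((deriv f u ^ 2 + deriv φ u ^ 2) ^ (-(1 : ℝ) / 2)) •
    vec4 (deriv φ u * cos v * cos w) (deriv φ u * sin v * cos w)
      (deriv φ u * sin w) (-deriv f u)

/-- The first fundamental form matrix `I = (⟨∂ᵢx, ∂ⱼx⟩)ᵢⱼ`. -/
def firstFF (f φ : ℝ → ℝ) (u v w : ℝ) : Matrix (Fin 3) (Fin 3) ℝ :=
  Matrix.of fun i j => (inner ℝ (pd i (rotHyp f φ) u v w) (pd j (rotHyp f φ) u v w) : ℝ)

/-- The second fundamental form matrix `II = (⟨∂ᵢ∂ⱼx, G⟩)ᵢⱼ`. -/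
def secondFF (f φ : ℝ → ℝ) (u v w : ℝ) : Matrix (Fin 3) (Fin 3) ℝ :=
  Matrix.of fun i j => (inner ℝ (pd i (pd j (rotHyp f φ)) u v w) (gaussMap f φ u v w) : ℝ)

/-- The third fundamental form matrix `III = (⟨∂ᵢG, ∂ⱼG⟩)ᵢⱼ`. -/
def thirdFF (f φ : ℝ → ℝ) (u v w : ℝ) : Matrix (Fin 3) (Fin 3) ℝ :=
  Matrix.of fun i j => (inner ℝ (pd i (gaussMap f φ) u v w) (pd j (gaussMap f φ) u v w) : ℝ)

/-- The shape operator matrix `S = I⁻¹ · II`. -/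
def shapeOp (f φ : ℝ → ℝ) (u v w : ℝ) : Matrix (Fin 3) (Fin 3) ℝ :=
  (firstFF f φ u v w)⁻¹ * secondFF f φ u v w

/-- The fourth fundamental form matrix `IV = III · S`. -/
def fourthFF (f φ : ℝ → ℝ) (u v w : ℝ) : Matrix (Fin 3) (Fin 3) ℝ :=
  thirdFF f φ u v w * shapeOp f φ u v w

lemma smul_vec4 (r a b c d : ℝ) : r • vec4 a b c d = vec4 (r*a) (r*b) (r*c) (r*d) := by
  ext i; fin_cases i <;> simp [vec4]

lemma inner_vec4 (a b c d a' b' c' d' : ℝ) :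
    (inner ℝ (vec4 a b c d) (vec4 a' b' c' d') : ℝ) = a*a' + b*b' + c*c' + d*d' := by
  simp [vec4, PiLp.inner_apply, Fin.sum_univ_four]
  ring

lemma hasDerivAt_vec4 {a b c d : ℝ → ℝ} {a' b' c' d' t : ℝ}
    (ha : HasDerivAt a a' t) (hb : HasDerivAt b b' t) (hc : HasDerivAt c c' t)
    (hd : HasDerivAt d d' t) :
    HasDerivAt (fun s => vec4 (a s) (b s) (c s) (d s)) (vec4 a' b' c' d') t := by
  have hpi : HasDerivAt (fun s => ![a s, b s, c s, d s] : ℝ → Fin 4 → ℝ)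
      ![a', b', c', d'] t := by
    rw [hasDerivAt_pi]
    intro i
    fin_cases i
    · simpa using ha
    · simpa using hb
    · simpa using hc
    · simpa using hd
  exact ((PiLp.continuousLinearEquiv 2 ℝ (fun _ : Fin 4 => ℝ)).symm
      : (Fin 4 → ℝ) →L[ℝ] EuclideanSpace ℝ (Fin 4)).hasFDerivAt.comp_hasDerivAt t hpi

/-- At every point with `W = f'² + φ'² > 0`, the third fundamental
form matrix of the rotational hypersurface is
`III = diag(ψ²/W², (φ'²/W)·cos²w, φ'²/W)`, where `ψ = f'·φ'' - f''·φ'`. -/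
theorem rotHyp_thirdFF (f φ : ℝ → ℝ) (hf : ContDiff ℝ (⊤ : ℕ∞) f) (hφ : ContDiff ℝ (⊤ : ℕ∞) φ)
    (u v w : ℝ) (hW : 0 < deriv f u ^ 2 + deriv φ u ^ 2) :
    thirdFF f φ u v w =
      Matrix.diagonal
        ![(deriv f u * deriv (deriv φ) u - deriv (deriv f) u * deriv φ u) ^ 2
            / (deriv f u ^ 2 + deriv φ u ^ 2) ^ 2,
          deriv φ u ^ 2 / (deriv f u ^ 2 + deriv φ u ^ 2) * cos w ^ 2,
          deriv φ u ^ 2 / (deriv f u ^ 2 + deriv φ u ^ 2)] := by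
  have hW0 : (deriv f u ^ 2 + deriv φ u ^ 2) ≠ 0 := ne_of_gt hW
  have hfd := (contDiff_infty_iff_deriv.mp (hf.of_le (by simp))).2
  have hφd := (contDiff_infty_iff_deriv.mp (hφ.of_le (by simp))).2
  have hF : HasDerivAt (deriv f) (deriv (deriv f) u) u :=
    ((hfd.differentiable (by simp)) u).hasDerivAt
  have hP : HasDerivAt (deriv φ) (deriv (deriv φ) u) u :=
    ((hφd.differentiable (by simp)) u).hasDerivAt
  have hWd : HasDerivAt (fun t => deriv f t ^ 2 + deriv φ t ^ 2)
      (2 * deriv f u ^ 1 * deriv (deriv f) u + 2 * deriv φ u ^ 1 * deriv (deriv φ) u) u := by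
    exact ((hF.pow 2).add (hP.pow 2)).congr_deriv (by norm_num)
  have hg : HasDerivAt (fun t => (deriv f t ^ 2 + deriv φ t ^ 2) ^ (-(1:ℝ)/2))
      ((2 * deriv f u ^ 1 * deriv (deriv f) u + 2 * deriv φ u ^ 1 * deriv (deriv φ) u)
        * (-(1:ℝ)/2) * (deriv f u ^ 2 + deriv φ u ^ 2) ^ (-(1:ℝ)/2 - 1)) u :=
    hWd.rpow_const (Or.inl hW0)
  -- abbreviations
  set F := deriv f u with hFd
  set P := deriv φ u with hPd
  set F₂ := deriv (deriv f) u with hF2d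
  set P₂ := deriv (deriv φ) u with hP2d
  set gu := (F ^ 2 + P ^ 2) ^ (-(1:ℝ)/2) with hgud
  set t3 := (F ^ 2 + P ^ 2) ^ (-(1:ℝ)/2 - 1) with ht3d
  set G1 := (2 * F ^ 1 * F₂ + 2 * P ^ 1 * P₂) * (-(1:ℝ)/2) * t3 with hG1d
  -- algebraic identities
  have hgut : gu = (F ^ 2 + P ^ 2) * t3 := by
    have h := Real.rpow_add hW 1 (-(1:ℝ)/2 - 1)
    rw [Real.rpow_one] at h
    rw [hgud, ht3d, ← h]
    norm_num
  have hgu2 : gu ^ 2 * (F ^ 2 + P ^ 2) = 1 := by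
    rw [hgud, ← Real.rpow_natCast ((F ^ 2 + P ^ 2) ^ (-(1:ℝ)/2)) 2,
      ← Real.rpow_mul hW.le]
    norm_num
    rw [Real.rpow_neg_one]
    exact inv_mul_cancel₀ hW0
  have ht32 : t3 ^ 2 * (F ^ 2 + P ^ 2) ^ 3 = 1 := by
    rw [ht3d, ← Real.rpow_natCast ((F ^ 2 + P ^ 2) ^ (-(1:ℝ)/2 - 1)) 2,
      ← Real.rpow_mul hW.le, ← Real.rpow_natCast (F ^ 2 + P ^ 2) 3,
      ← Real.rpow_add hW]
    norm_num
  have hv : sin v ^ 2 + cos v ^ 2 = 1 := sin_sq_add_cos_sq v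
  have hw : sin w ^ 2 + cos w ^ 2 = 1 := sin_sq_add_cos_sq w
  -- the partial derivatives of the Gauss map
  have hpd0 : pd 0 (gaussMap f φ) u v w =
      vec4 (G1 * (P * cos v * cos w) + gu * (P₂ * cos v * cos w))
        (G1 * (P * sin v * cos w) + gu * (P₂ * sin v * cos w))
        (G1 * (P * sin w) + gu * (P₂ * sin w))
        (G1 * (-F) + gu * (-F₂)) := by
    show deriv (fun t => gaussMap f φ t v w) u = _
    have e0 : (fun t => gaussMap f φ t v w) = fun t =>
        vec4 ((deriv f t ^ 2 + deriv φ t ^ 2) ^ (-(1:ℝ)/2) * (deriv φ t * cos v * cos w))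
          ((deriv f t ^ 2 + deriv φ t ^ 2) ^ (-(1:ℝ)/2) * (deriv φ t * sin v * cos w))
          ((deriv f t ^ 2 + deriv φ t ^ 2) ^ (-(1:ℝ)/2) * (deriv φ t * sin w))
          ((deriv f t ^ 2 + deriv φ t ^ 2) ^ (-(1:ℝ)/2) * (-deriv f t)) :=
      funext fun t => smul_vec4 _ _ _ _ _
    rw [e0]
    exact (hasDerivAt_vec4
      (hg.mul ((hP.mul_const (cos v)).mul_const (cos w)))
      (hg.mul ((hP.mul_const (sin v)).mul_const (cos w)))
      (hg.mul (hP.mul_const (sin w)))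
      (hg.mul hF.neg)).deriv
  have hpd1 : pd 1 (gaussMap f φ) u v w =
      vec4 (gu * (P * -sin v * cos w)) (gu * (P * cos v * cos w)) 0 0 := by
    show deriv (fun t => gaussMap f φ u t w) v = _
    have e1 : (fun t => gaussMap f φ u t w) = fun t =>
        vec4 (gu * (P * cos t * cos w)) (gu * (P * sin t * cos w))
          (gu * (P * sin w)) (gu * (-F)) :=
      funext fun t => smul_vec4 _ _ _ _ _
    rw [e1]
    exact (hasDerivAt_vec4
      ((((Real.hasDerivAt_cos v).const_mul P).mul_const (cos w)).const_mul gu)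
      ((((Real.hasDerivAt_sin v).const_mul P).mul_const (cos w)).const_mul gu)
      (hasDerivAt_const v _) (hasDerivAt_const v _)).deriv
  have hpd2 : pd 2 (gaussMap f φ) u v w =
      vec4 (gu * (P * cos v * -sin w)) (gu * (P * sin v * -sin w)) (gu * (P * cos w)) 0 := by
    show deriv (fun t => gaussMap f φ u v t) w = _
    have e2 : (fun t => gaussMap f φ u v t) = fun t =>
        vec4 (gu * (P * cos v * cos t)) (gu * (P * sin v * cos t))
          (gu * (P * sin t)) (gu * (-F)) :=
      funext fun t => smul_vec4 _ _ _ _ _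
    rw [e2]
    exact (hasDerivAt_vec4
      ((((Real.hasDerivAt_cos w).const_mul (P * cos v)).const_mul gu).congr_deriv (by ring))
      ((((Real.hasDerivAt_cos w).const_mul (P * sin v)).const_mul gu).congr_deriv (by ring))
      (((Real.hasDerivAt_sin w).const_mul P).const_mul gu)
      (hasDerivAt_const w _)).deriv
  ext i j
  fin_cases i <;> fin_cases j <;>
    simp [thirdFF, hpd0, hpd1, hpd2, inner_vec4, Matrix.diagonal, Fin.sum_univ_four,
      -inner_self_eq_norm_sq_to_K]
  · -- (0,0)
    rw [eq_div_iff (pow_ne_zero 2 hW0), hgut]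
    linear_combination
      (t3^2*(F*P₂-F₂*P)^2*(F^2+P^2)^2*F^2*cos w^2) * hv
      + (t3^2*(F*P₂-F₂*P)^2*(F^2+P^2)^2*F^2) * hw
      + ((F*P₂-F₂*P)^2) * ht32
  · ring
  · linear_combination (-((G1*P+gu*P₂) * gu * P * cos w * sin w)) * hv
  · ring
  · -- (1,1)
    rw [div_mul_eq_mul_div, eq_div_iff hW0]
    linear_combination (gu^2*(F^2+P^2)*P^2*cos w^2) * hv + (P^2*cos w^2) * hgu2
  · ring
  · linear_combination (-((G1*P+gu*P₂) * gu * P * cos w * sin w)) * hv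
  · ring
  · -- (2,2)
    rw [eq_div_iff hW0]
    linear_combination (gu^2*(F^2+P^2)*P^2*sin w^2) * hv
      + (gu^2*(F^2+P^2)*P^2) * hw + (P^2) * hgu2


end
end

section
/- At every point (u, v, w) with W(u) > 0, f(u) ≠ 0 and cos w ≠ 0, the shape operator matrix of the rotational hypersurface is the diagonal matrix S = diag(−ψ/W^{3/2}, −φ'/(f·W^{1/2}), −φ'/(f·W^{1/2})). -/
open Real Matrix

noncomputable section

section Aux

lemma vec4_apply (a b c d : ℝ) (i : Fin 4) : vec4 a b c d i = ![a,b,c,d] i := rfl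

variable {f φ : ℝ → ℝ}

lemma deriv_diff (hf : ContDiff ℝ (⊤ : ℕ∞) f) : Differentiable ℝ (deriv f) :=
  ((contDiff_infty_iff_deriv.mp (hf.of_le (by simp))).2).differentiable (by simp)

lemma pd0_rot (hf : ContDiff ℝ (⊤ : ℕ∞) f) (hφ : ContDiff ℝ (⊤ : ℕ∞) φ) :
    pd 0 (rotHyp f φ) = fun u v w => vec4 (deriv f u * cos v * cos w)
      (deriv f u * sin v * cos w) (deriv f u * sin w) (deriv φ u) := by
  funext u v w
  have hfd := (hf.differentiable (by simp) u).hasDerivAt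
  have hφd := (hφ.differentiable (by simp) u).hasDerivAt
  exact (hasDerivAt_vec4 ((hfd.mul_const _).mul_const _) ((hfd.mul_const _).mul_const _)
    (hfd.mul_const _) hφd).deriv

lemma pd1_rot :
    pd 1 (rotHyp f φ) = fun u v w => vec4 (f u * -sin v * cos w)
      (f u * cos v * cos w) 0 0 := by
  funext u v w
  exact (hasDerivAt_vec4 (((hasDerivAt_cos v).const_mul (f u)).mul_const _)
    (((hasDerivAt_sin v).const_mul (f u)).mul_const _)
    (hasDerivAt_const _ _) (hasDerivAt_const _ _)).deriv

lemma pd2_rot :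
    pd 2 (rotHyp f φ) = fun u v w => vec4 (f u * cos v * -sin w)
      (f u * sin v * -sin w) (f u * cos w) 0 := by
  funext u v w
  exact (hasDerivAt_vec4 ((hasDerivAt_cos w).const_mul (f u * cos v))
    ((hasDerivAt_cos w).const_mul (f u * sin v))
    ((hasDerivAt_sin w).const_mul (f u)) (hasDerivAt_const _ _)).deriv

lemma pd00 (hf : ContDiff ℝ (⊤ : ℕ∞) f) (hφ : ContDiff ℝ (⊤ : ℕ∞) φ) (u v w : ℝ) :
    pd 0 (pd 0 (rotHyp f φ)) u v w = vec4 (deriv (deriv f) u * cos v * cos w)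
      (deriv (deriv f) u * sin v * cos w) (deriv (deriv f) u * sin w)
      (deriv (deriv φ) u) := by
  rw [pd0_rot hf hφ]
  have hfd := (deriv_diff hf u).hasDerivAt
  have hφd := (deriv_diff hφ u).hasDerivAt
  exact (hasDerivAt_vec4 ((hfd.mul_const _).mul_const _) ((hfd.mul_const _).mul_const _)
    (hfd.mul_const _) hφd).deriv

lemma pd10 (hf : ContDiff ℝ (⊤ : ℕ∞) f) (hφ : ContDiff ℝ (⊤ : ℕ∞) φ) (u v w : ℝ) :
    pd 1 (pd 0 (rotHyp f φ)) u v w = vec4 (deriv f u * -sin v * cos w)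
      (deriv f u * cos v * cos w) 0 0 := by
  rw [pd0_rot hf hφ]
  exact (hasDerivAt_vec4 (((hasDerivAt_cos v).const_mul (deriv f u)).mul_const _)
    (((hasDerivAt_sin v).const_mul (deriv f u)).mul_const _)
    (hasDerivAt_const _ _) (hasDerivAt_const _ _)).deriv

lemma pd20 (hf : ContDiff ℝ (⊤ : ℕ∞) f) (hφ : ContDiff ℝ (⊤ : ℕ∞) φ) (u v w : ℝ) :
    pd 2 (pd 0 (rotHyp f φ)) u v w = vec4 (deriv f u * cos v * -sin w)
      (deriv f u * sin v * -sin w) (deriv f u * cos w) 0 := by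
  rw [pd0_rot hf hφ]
  exact (hasDerivAt_vec4 ((hasDerivAt_cos w).const_mul (deriv f u * cos v))
    ((hasDerivAt_cos w).const_mul (deriv f u * sin v))
    ((hasDerivAt_sin w).const_mul (deriv f u)) (hasDerivAt_const _ _)).deriv

lemma pd01 (hf : ContDiff ℝ (⊤ : ℕ∞) f) (u v w : ℝ) :
    pd 0 (pd 1 (rotHyp f φ)) u v w = vec4 (deriv f u * -sin v * cos w)
      (deriv f u * cos v * cos w) 0 0 := by
  rw [pd1_rot]
  have hfd := (hf.differentiable (by simp) u).hasDerivAt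
  exact (hasDerivAt_vec4 ((hfd.mul_const _).mul_const _) ((hfd.mul_const _).mul_const _)
    (hasDerivAt_const _ _) (hasDerivAt_const _ _)).deriv

lemma pd11 (u v w : ℝ) :
    pd 1 (pd 1 (rotHyp f φ)) u v w = vec4 (f u * -cos v * cos w)
      (f u * -sin v * cos w) 0 0 := by
  rw [pd1_rot]
  exact (hasDerivAt_vec4 ((((hasDerivAt_sin v).neg).const_mul (f u)).mul_const _)
    ((((hasDerivAt_cos v)).const_mul (f u)).mul_const _)
    (hasDerivAt_const _ _) (hasDerivAt_const _ _)).deriv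

lemma pd21 (u v w : ℝ) :
    pd 2 (pd 1 (rotHyp f φ)) u v w = vec4 (f u * -sin v * -sin w)
      (f u * cos v * -sin w) 0 0 := by
  rw [pd1_rot]
  exact (hasDerivAt_vec4 ((hasDerivAt_cos w).const_mul (f u * -sin v))
    ((hasDerivAt_cos w).const_mul (f u * cos v))
    (hasDerivAt_const _ _) (hasDerivAt_const _ _)).deriv

lemma pd02 (hf : ContDiff ℝ (⊤ : ℕ∞) f) (u v w : ℝ) :
    pd 0 (pd 2 (rotHyp f φ)) u v w = vec4 (deriv f u * cos v * -sin w)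
      (deriv f u * sin v * -sin w) (deriv f u * cos w) 0 := by
  rw [pd2_rot]
  have hfd := (hf.differentiable (by simp) u).hasDerivAt
  exact (hasDerivAt_vec4 ((hfd.mul_const _).mul_const _) ((hfd.mul_const _).mul_const _)
    (hfd.mul_const _) (hasDerivAt_const _ _)).deriv

lemma pd12 (u v w : ℝ) :
    pd 1 (pd 2 (rotHyp f φ)) u v w = vec4 (f u * -sin v * -sin w)
      (f u * cos v * -sin w) 0 0 := by
  rw [pd2_rot]
  exact (hasDerivAt_vec4 (((hasDerivAt_cos v).const_mul (f u)).mul_const _)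
    (((hasDerivAt_sin v).const_mul (f u)).mul_const _)
    (hasDerivAt_const _ _) (hasDerivAt_const _ _)).deriv

lemma pd22 (u v w : ℝ) :
    pd 2 (pd 2 (rotHyp f φ)) u v w = vec4 (f u * cos v * -cos w)
      (f u * sin v * -cos w) (f u * -sin w) 0 := by
  rw [pd2_rot]
  exact (hasDerivAt_vec4 (((hasDerivAt_sin w).neg).const_mul (f u * cos v))
    (((hasDerivAt_sin w).neg).const_mul (f u * sin v))
    ((hasDerivAt_cos w).const_mul (f u)) (hasDerivAt_const _ _)).deriv

set_option linter.unreachableTactic false in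
set_option linter.unusedTactic false in
lemma firstFF_eq (hf : ContDiff ℝ (⊤ : ℕ∞) f) (hφ : ContDiff ℝ (⊤ : ℕ∞) φ) (u v w : ℝ) :
    firstFF f φ u v w = Matrix.diagonal
      ![deriv f u ^ 2 + deriv φ u ^ 2, f u ^ 2 * cos w ^ 2, f u ^ 2] := by
  ext i j
  fin_cases i <;> fin_cases j <;>
    simp [firstFF, pd0_rot hf hφ, pd1_rot, pd2_rot, inner_vec4, vec4_apply,
      Fin.sum_univ_four, Matrix.diagonal, -inner_self_eq_norm_sq_to_K]
  all_goals first
    | ring1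
    | linear_combination (deriv f u ^ 2 * cos w ^ 2) * sin_sq_add_cos_sq v + deriv f u ^ 2 * sin_sq_add_cos_sq w
    | linear_combination (f u ^ 2 * cos w ^ 2) * sin_sq_add_cos_sq v
    | linear_combination (f u ^ 2 * sin w ^ 2) * sin_sq_add_cos_sq v + f u ^ 2 * sin_sq_add_cos_sq w
    | linear_combination (-(deriv f u * cos w * f u * sin w)) * sin_sq_add_cos_sq v
    | linear_combination (-(f u * sin w * deriv f u * cos w)) * sin_sq_add_cos_sq v

set_option linter.unreachableTactic false in
set_option linter.unusedTactic false in
lemma secondFF_eq (hf : ContDiff ℝ (⊤ : ℕ∞) f) (hφ : ContDiff ℝ (⊤ : ℕ∞) φ) (u v w : ℝ) :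
    secondFF f φ u v w = Matrix.diagonal
      ![(deriv φ u * deriv (deriv f) u - deriv f u * deriv (deriv φ) u) *
          (deriv f u ^ 2 + deriv φ u ^ 2) ^ (-(1:ℝ)/2),
        -(f u * deriv φ u * cos w ^ 2) * (deriv f u ^ 2 + deriv φ u ^ 2) ^ (-(1:ℝ)/2),
        -(f u * deriv φ u) * (deriv f u ^ 2 + deriv φ u ^ 2) ^ (-(1:ℝ)/2)] := by
  ext i j
  fin_cases i <;> fin_cases j <;>
    simp [secondFF, gaussMap, pd00 hf hφ, pd10 hf hφ, pd20 hf hφ, pd01 hf, pd11, pd21,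
      pd02 hf, pd12, pd22, real_inner_smul_right, inner_vec4, vec4_apply,
      Fin.sum_univ_four, Matrix.diagonal, -mul_eq_zero]
  all_goals
    set c := (deriv f u ^ 2 + deriv φ u ^ 2) ^ (-(1:ℝ)/2) with hc
  all_goals first
    | ring1
    | linear_combination (c * deriv (deriv f) u * deriv φ u * cos w ^ 2) * sin_sq_add_cos_sq v +
        (c * deriv (deriv f) u * deriv φ u) * sin_sq_add_cos_sq w
    | linear_combination (-(c * f u * deriv φ u * cos w ^ 2)) * sin_sq_add_cos_sq v
    | linear_combination (-(c * f u * deriv φ u * cos w ^ 2)) * sin_sq_add_cos_sq v +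
        (-(c * f u * deriv φ u)) * sin_sq_add_cos_sq w
    | linear_combination (-(c * deriv f u * deriv φ u * sin w * cos w)) * sin_sq_add_cos_sq v

end Aux

/-- At every point with `W = f'² + φ'² > 0`, `f(u) ≠ 0` and
`cos w ≠ 0`, the shape operator matrix of the rotational hypersurface is
`S = diag(-ψ/W^{3/2}, -φ'/(f·W^{1/2}), -φ'/(f·W^{1/2}))`, where `ψ = f'·φ'' - f''·φ'`. -/
theorem rotHyp_shapeOp (f φ : ℝ → ℝ) (hf : ContDiff ℝ (⊤ : ℕ∞) f) (hφ : ContDiff ℝ (⊤ : ℕ∞) φ)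
    (u v w : ℝ) (hW : 0 < deriv f u ^ 2 + deriv φ u ^ 2)
    (hfu : f u ≠ 0) (hw : cos w ≠ 0) :
    shapeOp f φ u v w =
      Matrix.diagonal
        ![-((deriv f u * deriv (deriv φ) u - deriv (deriv f) u * deriv φ u)
            / (deriv f u ^ 2 + deriv φ u ^ 2) ^ ((3 : ℝ) / 2)),
          -(deriv φ u / (f u * (deriv f u ^ 2 + deriv φ u ^ 2) ^ ((1 : ℝ) / 2))),
          -(deriv φ u / (f u * (deriv f u ^ 2 + deriv φ u ^ 2) ^ ((1 : ℝ) / 2)))] := by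
  have hI := firstFF_eq hf hφ u v w
  have hII := secondFF_eq hf hφ u v w
  have hW0 : (deriv f u ^ 2 + deriv φ u ^ 2) ≠ 0 := ne_of_gt hW
  have hs : (0:ℝ) < (deriv f u ^ 2 + deriv φ u ^ 2) ^ ((1:ℝ)/2) :=
    Real.rpow_pos_of_pos hW _
  have h32 : (deriv f u ^ 2 + deriv φ u ^ 2) ^ ((3:ℝ)/2)
      = (deriv f u ^ 2 + deriv φ u ^ 2) * (deriv f u ^ 2 + deriv φ u ^ 2) ^ ((1:ℝ)/2) := by
    rw [show (3:ℝ)/2 = 1 + 1/2 by norm_num, Real.rpow_add hW, Real.rpow_one]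
  have hneg : (deriv f u ^ 2 + deriv φ u ^ 2) ^ (-(1:ℝ)/2)
      = ((deriv f u ^ 2 + deriv φ u ^ 2) ^ ((1:ℝ)/2))⁻¹ := by
    rw [show -(1:ℝ)/2 = -((1:ℝ)/2) by ring, Real.rpow_neg hW.le]
  have key : secondFF f φ u v w = firstFF f φ u v w *
      Matrix.diagonal
        ![-((deriv f u * deriv (deriv φ) u - deriv (deriv f) u * deriv φ u)
            / (deriv f u ^ 2 + deriv φ u ^ 2) ^ ((3 : ℝ) / 2)),
          -(deriv φ u / (f u * (deriv f u ^ 2 + deriv φ u ^ 2) ^ ((1 : ℝ) / 2))),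
          -(deriv φ u / (f u * (deriv f u ^ 2 + deriv φ u ^ 2) ^ ((1 : ℝ) / 2)))] := by
    rw [hI, hII, Matrix.diagonal_mul_diagonal]
    refine congrArg Matrix.diagonal (funext fun i => ?_)
    fin_cases i <;>
      simp only [Pi.mul_apply, Matrix.cons_val_zero, Matrix.cons_val_one, Matrix.head_cons,
        Matrix.cons_val_two, Matrix.tail_cons, hneg, h32, Fin.zero_eta, Fin.mk_one, Fin.reduceFinMk] <;>
      field_simp <;> ring
  have hdet : IsUnit (firstFF f φ u v w).det := by
    rw [hI, Matrix.det_diagonal, Fin.prod_univ_three]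
    simp only [Matrix.cons_val_zero, Matrix.cons_val_one, Matrix.head_cons,
      Matrix.cons_val_two, Matrix.tail_cons]
    exact isUnit_iff_ne_zero.mpr (mul_ne_zero (mul_ne_zero hW0
      (mul_ne_zero (pow_ne_zero 2 hfu) (pow_ne_zero 2 hw))) (pow_ne_zero 2 hfu))
  rw [shapeOp, key, ← Matrix.mul_assoc, Matrix.nonsing_inv_mul _ hdet, Matrix.one_mul]

end
end

section
/- (Catenoidal hypersurface) Let a > 0, f(u) = a·cosh u and φ(u) = a·u. Then at every point (u, v, w) with cos w ≠ 0, the curvatures of the rotational hypersurface are 𝔠₁ = −1/(3a·cosh²u), 𝔠₂ = −1/(3a²·cosh⁴u) and 𝔠₃ = 1/(a³·cosh⁶u). -/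
open Real Matrix

noncomputable section

/-! Write `x = f(u) • σ(v,w) + φ(u) • e₄`, where `σ` is the spherical parametrisation of the
unit sphere `S² ⊂ ℝ³ × {0}`. Every first and second partial derivative of `x` is a combination of
`σ`, `σ_v`, `σ_w`, their derivatives and `e₄`, and `sin² + cos² = 1` makes the fundamental forms
diagonal: `I = diag(W, f² cos² w, f²)` and `II = W^{-1/2} diag(-ψ, -f φ' cos² w, -f φ')`. Hence
`S` is diagonal with the principal curvatures `-ψ/W^{3/2}` and twice `-φ'/(f √W)`, and
`3𝔠₁, 3𝔠₂, 𝔠₃` are their elementary symmetric functions. For the catenoid `W = a² cosh² u` and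
`ψ = -a² cosh u`, so the principal curvatures are `κ, -κ, -κ` with `κ = 1/(a cosh² u)`. -/

lemma hasDerivAt_vec4_s18 {g₀ g₁ g₂ g₃ : ℝ → ℝ} {d₀ d₁ d₂ d₃ t : ℝ}
    (h₀ : HasDerivAt g₀ d₀ t) (h₁ : HasDerivAt g₁ d₁ t)
    (h₂ : HasDerivAt g₂ d₂ t) (h₃ : HasDerivAt g₃ d₃ t) :
    HasDerivAt (fun s => vec4 (g₀ s) (g₁ s) (g₂ s) (g₃ s)) (vec4 d₀ d₁ d₂ d₃) t := by
  have hpi : HasDerivAt (fun s => ![g₀ s, g₁ s, g₂ s, g₃ s]) ![d₀, d₁, d₂, d₃] t := by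
    rw [hasDerivAt_pi]
    intro i
    fin_cases i <;> simpa
  exact (PiLp.continuousLinearEquiv 2 ℝ (fun _ : Fin 4 => ℝ)).symm.hasFDerivAt.comp_hasDerivAt
    t hpi

lemma inner_vec4_s18 (p q r s p' q' r' s' : ℝ) :
    (inner ℝ (vec4 p q r s) (vec4 p' q' r' s') : ℝ) = p * p' + q * q' + r * r' + s * s' := by
  simp [vec4, PiLp.inner_apply, Fin.sum_univ_four]
  ring

lemma smul_vec4_s18 (c p q r s : ℝ) : c • vec4 p q r s = vec4 (c * p) (c * q) (c * r) (c * s) := by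
  ext i; fin_cases i <;> simp [vec4]

namespace Matrix

variable {n K : Type*} [Fintype n] [DecidableEq n] [Field K]

theorem inv_diagonal_mul_diagonal {d : n → K} (hd : ∀ i, d i ≠ 0) (e : n → K) :
    (diagonal d)⁻¹ * diagonal e = diagonal (e / d) := by
  have hinv : (diagonal d)⁻¹ = diagonal d⁻¹ := by
    refine inv_eq_left_inv ?_
    rw [diagonal_mul_diagonal, ← diagonal_one]
    congr 1
    funext i
    exact inv_mul_cancel₀ (hd i)
  rw [hinv, diagonal_mul_diagonal, div_eq_inv_mul]
  rfl

theorem det_diagonal_sub_smul_one (d : n → K) (t : K) :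
    (diagonal d - t • (1 : Matrix n n K)).det = ∏ i, (d i - t) := by
  rw [smul_one_eq_diagonal, diagonal_sub, det_diagonal]

end Matrix

theorem cubic_coeffs_eq_of_forall_eq_prod {K : Type*} [Field K] [CharZero K] {c₁ c₂ c₃ : K}
    (k : Fin 3 → K) (h : ∀ t, -t ^ 3 + 3 * c₁ * t ^ 2 - 3 * c₂ * t + c₃ = ∏ i, (k i - t)) :
    3 * c₁ = k 0 + k 1 + k 2 ∧ 3 * c₂ = k 0 * k 1 + k 1 * k 2 + k 2 * k 0 ∧
      c₃ = k 0 * k 1 * k 2 := by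
  have h₀ := h 0
  have h₁ := h 1
  have h₂ := h (-1)
  simp only [Fin.prod_univ_three] at h₀ h₁ h₂
  refine ⟨?_, ?_, ?_⟩
  · linear_combination (1 / 2 : K) * h₁ + (1 / 2 : K) * h₂ - h₀
  · linear_combination (1 / 2 : K) * h₂ - (1 / 2 : K) * h₁
  · linear_combination h₀

/-- `sphereParam` parametrises the unit sphere `S²` of `ℝ³ × {0}` by spherical coordinates;
`sphereParamDv` and `sphereParamDw` are its partial derivatives, written in the form in which the
product rule produces them. -/
def sphereParam (v w : ℝ) : EuclideanSpace ℝ (Fin 4) :=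
  vec4 (cos v * cos w) (sin v * cos w) (sin w) 0

def sphereParamDv (v w : ℝ) : EuclideanSpace ℝ (Fin 4) :=
  vec4 (-sin v * cos w) (cos v * cos w) 0 0

def sphereParamDw (v w : ℝ) : EuclideanSpace ℝ (Fin 4) :=
  vec4 (cos v * -sin w) (sin v * -sin w) (cos w) 0

section Sphere

variable (v w : ℝ)

lemma hasDerivAt_sphereParam_v : HasDerivAt (fun t => sphereParam t w) (sphereParamDv v w) v :=
  hasDerivAt_vec4_s18 ((hasDerivAt_cos v).mul_const _) ((hasDerivAt_sin v).mul_const _)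
    (hasDerivAt_const _ _) (hasDerivAt_const _ _)

lemma hasDerivAt_sphereParam_w : HasDerivAt (sphereParam v) (sphereParamDw v w) w :=
  hasDerivAt_vec4_s18 ((hasDerivAt_cos w).const_mul _) ((hasDerivAt_cos w).const_mul _)
    (hasDerivAt_sin w) (hasDerivAt_const _ _)

lemma hasDerivAt_sphereParamDv_v :
    HasDerivAt (fun t => sphereParamDv t w) (vec4 (-cos v * cos w) (-sin v * cos w) 0 0) v :=
  hasDerivAt_vec4_s18 ((hasDerivAt_sin v).neg.mul_const _) ((hasDerivAt_cos v).mul_const _)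
    (hasDerivAt_const _ _) (hasDerivAt_const _ _)

lemma hasDerivAt_sphereParamDv_w :
    HasDerivAt (sphereParamDv v) (vec4 (-sin v * -sin w) (cos v * -sin w) 0 0) w :=
  hasDerivAt_vec4_s18 ((hasDerivAt_cos w).const_mul _) ((hasDerivAt_cos w).const_mul _)
    (hasDerivAt_const _ _) (hasDerivAt_const _ _)

lemma hasDerivAt_sphereParamDw_v :
    HasDerivAt (fun t => sphereParamDw t w) (vec4 (-sin v * -sin w) (cos v * -sin w) 0 0) v :=
  hasDerivAt_vec4_s18 ((hasDerivAt_cos v).mul_const _) ((hasDerivAt_sin v).mul_const _)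
    (hasDerivAt_const _ _) (hasDerivAt_const _ _)

lemma hasDerivAt_sphereParamDw_w :
    HasDerivAt (sphereParamDw v) (vec4 (cos v * -cos w) (sin v * -cos w) (-sin w) 0) w :=
  hasDerivAt_vec4_s18 ((hasDerivAt_sin w).neg.const_mul _) ((hasDerivAt_sin w).neg.const_mul _)
    (hasDerivAt_cos w) (hasDerivAt_const _ _)

end Sphere

section SeparableMap

variable {g : ℝ → ℝ} {E : ℝ → ℝ → EuclideanSpace ℝ (Fin 4)} {u v w : ℝ}

lemma pd_zero_smul (hg : DifferentiableAt ℝ g u) :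
    pd 0 (fun u v w => g u • E v w) u v w = deriv g u • E v w :=
  (hg.hasDerivAt.smul_const _).deriv

lemma pd_one_smul {E' : EuclideanSpace ℝ (Fin 4)} (hE : HasDerivAt (fun t => E t w) E' v) :
    pd 1 (fun u v w => g u • E v w) u v w = g u • E' :=
  (hE.const_smul (g u)).deriv

lemma pd_two_smul {E' : EuclideanSpace ℝ (Fin 4)} (hE : HasDerivAt (E v) E' w) :
    pd 2 (fun u v w => g u • E v w) u v w = g u • E' :=
  (hE.const_smul (g u)).deriv

end SeparableMap

section RotationalHypersurface

variable {f φ : ℝ → ℝ} {u v w : ℝ}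

lemma rotHyp_eq : rotHyp f φ u v w = f u • sphereParam v w + vec4 0 0 0 (φ u) := by
  ext i; fin_cases i <;> simp [rotHyp, sphereParam, vec4, mul_assoc]

lemma pd_zero_rotHyp (hf : DifferentiableAt ℝ f u) (hφ : DifferentiableAt ℝ φ u) :
    pd 0 (rotHyp f φ) u v w = rotHyp (deriv f) (deriv φ) u v w := by
  have h := (hf.hasDerivAt.smul_const (sphereParam v w)).add
    (hasDerivAt_vec4_s18 (hasDerivAt_const u 0) (hasDerivAt_const u 0) (hasDerivAt_const u 0)
      hφ.hasDerivAt)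
  simp only [pd, rotHyp_eq]
  exact h.deriv

lemma pd_one_rotHyp : pd 1 (rotHyp f φ) = fun u v w => f u • sphereParamDv v w := by
  funext u v w
  simp only [pd, rotHyp_eq]
  exact (((hasDerivAt_sphereParam_v v w).const_smul (f u)).add_const _).deriv

lemma pd_two_rotHyp : pd 2 (rotHyp f φ) = fun u v w => f u • sphereParamDw v w := by
  funext u v w
  simp only [pd, rotHyp_eq]
  exact (((hasDerivAt_sphereParam_w v w).const_smul (f u)).add_const _).deriv

lemma firstFF_rotHyp (hf : DifferentiableAt ℝ f u) (hφ : DifferentiableAt ℝ φ u) :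
    firstFF f φ u v w =
      diagonal ![deriv f u ^ 2 + deriv φ u ^ 2, f u ^ 2 * cos w ^ 2, f u ^ 2] := by
  have hv := sin_sq_add_cos_sq v
  have hw := sin_sq_add_cos_sq w
  ext i j
  fin_cases i <;> fin_cases j <;>
    simp only [firstFF, of_apply, diagonal_apply, Fin.zero_eta, Fin.mk_one, Fin.reduceFinMk,
      Fin.isValue, Fin.reduceEq, ↓reduceIte, cons_val, pd_zero_rotHyp hf hφ, pd_one_rotHyp,
      pd_two_rotHyp, rotHyp, sphereParamDv, sphereParamDw, smul_vec4_s18, inner_vec4_s18] <;> grind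

lemma secondFF_rotHyp (hf : Differentiable ℝ f) (hφ : Differentiable ℝ φ)
    (hf' : DifferentiableAt ℝ (deriv f) u) (hφ' : DifferentiableAt ℝ (deriv φ) u) :
    secondFF f φ u v w =
      let r := (deriv f u ^ 2 + deriv φ u ^ 2) ^ (-(1 : ℝ) / 2)
      diagonal ![(deriv (deriv f) u * deriv φ u - deriv f u * deriv (deriv φ) u) * r,
        -(f u * deriv φ u * cos w ^ 2 * r), -(f u * deriv φ u * r)] := by
  have hv := sin_sq_add_cos_sq v
  have hw := sin_sq_add_cos_sq w
  have h₀ : pd 0 (rotHyp f φ) = rotHyp (deriv f) (deriv φ) := by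
    funext u v w; exact pd_zero_rotHyp (hf u) (hφ u)
  ext i j
  fin_cases i <;> fin_cases j <;>
    simp only [secondFF, of_apply, Fin.zero_eta, Fin.mk_one, Fin.reduceFinMk] <;>
    simp only [h₀, pd_zero_rotHyp hf' hφ', pd_one_rotHyp, pd_two_rotHyp,
      pd_zero_smul (E := sphereParamDv) (hf u), pd_zero_smul (E := sphereParamDw) (hf u),
      pd_one_smul (hasDerivAt_sphereParamDv_v v w), pd_one_smul (hasDerivAt_sphereParamDw_v v w),
      pd_two_smul (hasDerivAt_sphereParamDv_w v w),
      pd_two_smul (hasDerivAt_sphereParamDw_w v w)] <;>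
    simp only [gaussMap, diagonal_apply, Fin.isValue, Fin.reduceEq, ↓reduceIte, cons_val,
      rotHyp, sphereParamDv, sphereParamDw, smul_vec4_s18, inner_vec4_s18] <;> grind

lemma shapeOp_rotHyp (hf : Differentiable ℝ f) (hφ : Differentiable ℝ φ)
    (hf' : DifferentiableAt ℝ (deriv f) u) (hφ' : DifferentiableAt ℝ (deriv φ) u)
    (hW : deriv f u ^ 2 + deriv φ u ^ 2 ≠ 0) (hfu : f u ≠ 0) (hw : cos w ≠ 0) :
    shapeOp f φ u v w =
      let r := (deriv f u ^ 2 + deriv φ u ^ 2) ^ (-(1 : ℝ) / 2)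
      diagonal ![(deriv (deriv f) u * deriv φ u - deriv f u * deriv (deriv φ) u) * r /
          (deriv f u ^ 2 + deriv φ u ^ 2), -(deriv φ u * r / f u), -(deriv φ u * r / f u)] := by
  rw [shapeOp, firstFF_rotHyp (hf u) (hφ u), secondFF_rotHyp hf hφ hf' hφ',
    inv_diagonal_mul_diagonal]
  · congr 1
    funext i
    fin_cases i <;>
      simp only [Fin.zero_eta, Fin.mk_one, Fin.reduceFinMk, Fin.isValue, Pi.div_apply, cons_val] <;>
      field_simp
  · intro i
    fin_cases i <;> simp [hW, hfu, hw]

end RotationalHypersurface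

lemma shapeOp_catenoid {a : ℝ} (ha : 0 < a) (u v : ℝ) {w : ℝ} (hw : cos w ≠ 0) :
    shapeOp (fun u => a * cosh u) (fun u => a * u) u v w =
      diagonal ![(a * cosh u ^ 2)⁻¹, -(a * cosh u ^ 2)⁻¹, -(a * cosh u ^ 2)⁻¹] := by
  have hf' : deriv (fun u => a * cosh u) = fun u => a * sinh u :=
    funext fun u => ((hasDerivAt_cosh u).const_mul a).deriv
  have hf'' : deriv (fun u => a * sinh u) = fun u => a * cosh u :=
    funext fun u => ((hasDerivAt_sinh u).const_mul a).deriv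
  have hφ' : deriv (fun u : ℝ => a * u) = fun _ => a :=
    funext fun u => by simp
  have hpos : 0 < a * cosh u := mul_pos ha (cosh_pos u)
  have hW : (a * sinh u) ^ 2 + a ^ 2 = (a * cosh u) ^ 2 := by
    rw [mul_pow, mul_pow, cosh_sq]; ring
  have hr : ((a * cosh u) ^ 2) ^ (-(1 : ℝ) / 2) = (a * cosh u)⁻¹ := by
    rw [← rpow_natCast, ← rpow_mul hpos.le, show ((2 : ℕ) : ℝ) * (-1 / 2) = -1 by norm_num,
      rpow_neg_one]
  rw [shapeOp_rotHyp (by fun_prop) (by fun_prop) (by rw [hf']; fun_prop) (by rw [hφ']; fun_prop)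
    (by rw [hf', hφ', hW]; positivity) (by positivity) hw]
  simp only [hf', hf'', hφ', deriv_const', hW, hr]
  congr 1
  funext i
  fin_cases i <;>
    simp only [Fin.zero_eta, Fin.mk_one, Fin.reduceFinMk, Fin.isValue, cons_val, mul_zero,
      sub_zero] <;>
    field_simp

/-- catenoidal hypersurface.  For `a > 0`, `f(u) = a·cosh u` and
`φ(u) = a·u`, the curvatures of the rotational hypersurface — defined by the
characteristic polynomial identity — are `c₁ = -1/(3a·cosh²u)`,
`c₂ = -1/(3a²·cosh⁴u)` and `c₃ = 1/(a³·cosh⁶u)` at every point with `cos w ≠ 0`. -/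
theorem catenoidal_hypersurface_curvatures (a : ℝ) (ha : 0 < a)
    (c₁ c₂ c₃ : ℝ → ℝ → ℝ → ℝ)
    (hchar : ∀ u v w lam : ℝ,
      (shapeOp (fun u => a * Real.cosh u) (fun u => a * u) u v w
          - lam • (1 : Matrix (Fin 3) (Fin 3) ℝ)).det
        = -lam ^ 3 + 3 * c₁ u v w * lam ^ 2 - 3 * c₂ u v w * lam + c₃ u v w) :
    ∀ u v w : ℝ, cos w ≠ 0 →
      c₁ u v w = -1 / (3 * a * Real.cosh u ^ 2) ∧
      c₂ u v w = -1 / (3 * a ^ 2 * Real.cosh u ^ 4) ∧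
      c₃ u v w = 1 / (a ^ 3 * Real.cosh u ^ 6) := by
  intro u v w hw
  obtain ⟨h₁, h₂, h₃⟩ := cubic_coeffs_eq_of_forall_eq_prod
    ![(a * cosh u ^ 2)⁻¹, -(a * cosh u ^ 2)⁻¹, -(a * cosh u ^ 2)⁻¹] fun t => by
      rw [← hchar u v w t, shapeOp_catenoid ha u v hw, det_diagonal_sub_smul_one]
  simp only [cons_val] at h₁ h₂ h₃
  have hden : a * cosh u ^ 2 ≠ 0 := by positivity
  refine ⟨?_, ?_, ?_⟩
  · field_simp at h₁ ⊢
    linarith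
  · field_simp at h₂ ⊢
    linarith
  · field_simp at h₃ ⊢
    linarith

end
end
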